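/- Suppose E₀ is an eigenvalue of the adjacency matrix Δ_ℋ of the finite graph ℋ admitting orthonormal eigenvectors ψ_1, …, ψ_l (l ≥ 2) that all vanish at vertices x_1, …, x_m ∈ 𝒱, that the distinguished vertices satisfy v_i = x_{π(i)} for some map π : {−n,…,n} → {1,…,m}, that G is infinite, and that (ω_g)_{g∈G} are i.i.d. real random variables with absolutely continuous common law μ. Then almost surely E₀ + supp(μ) is contained in the pure point spectrum of H^ω_G (the closure of its set of eigenvalues), and almost surely each eigenvalue E₀ + ω_g, g ∈ G, has multiplicity at least l. -/

import Mathlib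

open scoped Classical

/-!
Cayley-type graph setup.  Given a finite undirected graph `ℋ` on `V`, distinguished
vertices `v_i = vpos i` and `v_{-i} = vneg i` (`1 ≤ i ≤ n`), and a group `G` generated by
`g_i = gen i`, the graph `ℋ_G` on `𝒱_G = V × G` has the fibre edges `{(v,g),(w,g)}` for
`{v,w} ∈ ℰ` and the cross edges `{(v_{-i},g),(v_i, g·gᵢ)}`.
-/

/-- The base relation generating the edges of `ℋ_G`. -/
def cayRel {V G : Type*} [Group G] (H : SimpleGraph V) {n : ℕ}
    (vpos vneg : Fin n → V) (gen : Fin n → G) (p q : V × G) : Prop :=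
  (p.2 = q.2 ∧ H.Adj p.1 q.1) ∨ ∃ i : Fin n, p.1 = vneg i ∧ q.1 = vpos i ∧ q.2 = p.2 * gen i

/-- The Cayley-type graph `ℋ_G` on `V × G`. -/
def cayGraph {V G : Type*} [Group G] (H : SimpleGraph V) {n : ℕ}
    (vpos vneg : Fin n → V) (gen : Fin n → G) : SimpleGraph (V × G) :=
  SimpleGraph.fromRel (cayRel H vpos vneg gen)

/-- The adjacency operator `Δ_{ℋ_G}` of `ℋ_G`: `(Δ u)(p) = Σ_{q adjacent to p} u(q)`. -/
noncomputable def cayAdjOp {V G : Type*} [Group G] (H : SimpleGraph V) {n : ℕ}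
    (vpos vneg : Fin n → V) (gen : Fin n → G) (u : V × G → ℂ) (p : V × G) : ℂ :=
  ∑' q : V × G, if (cayGraph H vpos vneg gen).Adj p q then u q else 0

/-- The Anderson-type operator `H^ω_G = Δ_{ℋ_G} + Σ_{g∈G} ω_g P_g`, where `P_g` is the
coordinate projection onto `V × {g}`. -/
noncomputable def cayH {V G : Type*} [Group G] (H : SimpleGraph V) {n : ℕ}
    (vpos vneg : Fin n → V) (gen : Fin n → G) (ω : G → ℝ) (u : V × G → ℂ) (p : V × G) : ℂ :=
  cayAdjOp H vpos vneg gen u p + (ω p.2 : ℂ) * u p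

open MeasureTheory ProbabilityTheory

/-- The adjacency matrix `Δ_ℋ` of the finite graph `ℋ`, acting on functions `V → ℂ`. -/
noncomputable def adjOpC {V : Type*} [Fintype V] (H : SimpleGraph V) (u : V → ℂ) (v : V) : ℂ :=
  ∑ w : V, if H.Adj v w then u w else 0

/-- The topological support of a Borel measure on `ℝ`. -/
def measSupport (μ : Measure ℝ) : Set ℝ :=
  {x : ℝ | ∀ U : Set ℝ, IsOpen U → x ∈ U → 0 < μ U}

/-!
An eigenvector of `Δ_ℋ` that vanishes at every vertex `v_{±i}`, placed on a single fibre
`𝒱 × {g}`, does not see the cross edges of `ℋ_G`; hence it is an eigenvector of `H^ω_G` with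
eigenvalue `E₀ + ω_g`, and the `l` orthonormal `ψ_i` give `l` orthonormal such eigenvectors.
Since `G` is infinite and the `ω_g` are i.i.d., a fixed set `U` with `μ U > 0` is missed by
`N` distinct `ω_g` with probability `(1 - μ U)^N → 0`. Applied to a countable basis of `ℝ`,
this makes `{ω_g}` almost surely dense in `supp μ`, so `E₀ + supp μ` lies in the closure of
the eigenvalues.
-/

section Probability

variable {ι Ω : Type*} [Infinite ι] [MeasurableSpace Ω] {P : Measure Ω} [IsProbabilityMeasure P]

theorem ae_exists_mem_of_iIndepFun {β : Type*} [MeasurableSpace β] {μ : Measure β}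
    {ω : ι → Ω → β} (hmeas : ∀ i, Measurable (ω i))
    (hlaw : ∀ i, Measure.map (ω i) P = μ) (hindep : iIndepFun ω P)
    {U : Set β} (hU : MeasurableSet U) (hμU : 0 < μ U) :
    ∀ᵐ ρ ∂P, ∃ i, ω i ρ ∈ U := by
  have hmiss : ∀ i, P (ω i ⁻¹' U)ᶜ = 1 - μ U := fun i => by
    rw [prob_compl_eq_one_sub (hmeas i hU), ← hlaw i,
      Measure.map_apply (hmeas i) hU]
  have hbound : ∀ N : ℕ, P {ρ | ∀ i, ω i ρ ∉ U} ≤ (1 - μ U) ^ N := fun N => by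
    let S := (Finset.range N).map (Infinite.natEmbedding ι)
    calc P {ρ | ∀ i, ω i ρ ∉ U}
        ≤ P (⋂ i ∈ S, (ω i ⁻¹' U)ᶜ) := measure_mono fun ρ hρ => Set.mem_iInter₂.2 fun i _ => hρ i
      _ = ∏ i ∈ S, P (ω i ⁻¹' U)ᶜ := hindep.meas_biInter fun i _ => ⟨Uᶜ, hU.compl, rfl⟩
      _ = (1 - μ U) ^ N := by simp [S, hmiss]
  have hlt : 1 - μ U < 1 := ENNReal.sub_lt_self ENNReal.one_ne_top one_ne_zero hμU.ne'
  rw [ae_iff]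
  push Not
  exact nonpos_iff_eq_zero.1
    (ge_of_tendsto' (ENNReal.tendsto_pow_atTop_nhds_zero_of_lt_one hlt) hbound)

theorem ae_measSupport_subset_closure_range {μ : Measure ℝ} {ω : ι → Ω → ℝ}
    (hmeas : ∀ i, Measurable (ω i)) (hlaw : ∀ i, Measure.map (ω i) P = μ)
    (hindep : iIndepFun ω P) :
    ∀ᵐ ρ ∂P, measSupport μ ⊆ closure (Set.range fun i => ω i ρ) := by
  obtain ⟨B, hBc, -, hB⟩ := TopologicalSpace.exists_countable_basis ℝ
  have hhit : ∀ᵐ ρ ∂P, ∀ U ∈ B, 0 < μ U → ∃ i, ω i ρ ∈ U := by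
    refine (ae_ball_iff hBc).2 fun U hU => ?_
    by_cases hμU : 0 < μ U
    · filter_upwards [ae_exists_mem_of_iIndepFun hmeas hlaw hindep
        (hB.isOpen hU).measurableSet hμU] with ρ hρ using fun _ => hρ
    · exact Filter.Eventually.of_forall fun _ h => absurd h hμU
  filter_upwards [hhit] with ρ hρ t ht
  refine hB.mem_closure_iff.2 fun U hU htU => ?_
  obtain ⟨i, hi⟩ := hρ U hU (ht U (hB.isOpen hU) htU)
  exact ⟨ω i ρ, hi, i, rfl⟩

end Probability

section Fibre

variable {V G : Type*}

theorem tsum_eq_sum_of_eq_zero_off_fibre {M : Type*} [AddCommMonoid M] [TopologicalSpace M]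
    [Fintype V] (g : G) (f : V × G → M) (hf : ∀ q : V × G, q.2 ≠ g → f q = 0) :
    ∑' q, f q = ∑ v, f (v, g) := by
  have hsupp : Function.support f ⊆ Set.range fun v => (v, g) := fun q hq =>
    ⟨q.1, Prod.ext rfl (not_not.1 fun h => hq (hf q h)).symm⟩
  rw [← (Prod.mk_left_injective g).tsum_eq hsupp, tsum_fintype]

noncomputable def fibreLift (g : G) (f : V → ℂ) (q : V × G) : ℂ :=
  if q.2 = g then f q.1 else 0

theorem fibreLift_ne_zero {f : V → ℂ} (hf : f ≠ 0) (g : G) : fibreLift g f ≠ 0 := by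
  intro h
  exact hf (funext fun v => by simpa [fibreLift] using congrFun h (v, g))

theorem memℓp_fibreLift [Finite V] (g : G) (f : V → ℂ) (p : ENNReal) :
    Memℓp (fibreLift g f) p := by
  refine (memℓp_zero ((Set.finite_range fun v : V => (v, g)).subset ?_)).of_exponent_ge
    zero_le
  intro q hq
  by_cases h : q.2 = g
  · exact ⟨q.1, Prod.ext rfl h.symm⟩
  · simp [fibreLift, h] at hq

theorem tsum_conj_fibreLift_mul [Fintype V] (g : G) (f₁ f₂ : V → ℂ) :
    ∑' q, starRingEnd ℂ (fibreLift g f₁ q) * fibreLift g f₂ q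
      = ∑ v, starRingEnd ℂ (f₁ v) * f₂ v := by
  rw [tsum_eq_sum_of_eq_zero_off_fibre g _ fun q hq => by simp [fibreLift, hq]]
  simp [fibreLift]

variable [Group G] (H : SimpleGraph V) {n : ℕ} (vpos vneg : Fin n → V) (gen : Fin n → G)

theorem cayGraph_adj_mk_iff {w : V} (hpos : ∀ k, vpos k ≠ w) (hneg : ∀ k, vneg k ≠ w)
    (p : V × G) (g : G) :
    (cayGraph H vpos vneg gen).Adj p (w, g) ↔ p.2 = g ∧ H.Adj p.1 w := by
  simp only [cayGraph, SimpleGraph.fromRel_adj, cayRel]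
  constructor
  · rintro ⟨-, (hfib | ⟨k, -, hk, -⟩) | (hfib | ⟨k, hk, -⟩)⟩
    · exact hfib
    · exact absurd hk.symm (hpos k)
    · exact ⟨hfib.1.symm, hfib.2.symm⟩
    · exact absurd hk.symm (hneg k)
  · rintro ⟨hg, hadj⟩
    exact ⟨fun h => H.irrefl (h ▸ hadj), Or.inl (Or.inl ⟨hg, hadj⟩)⟩

theorem cayAdjOp_fibreLift [Fintype V] {f : V → ℂ} (hpos : ∀ k, f (vpos k) = 0)
    (hneg : ∀ k, f (vneg k) = 0) (g : G) :
    cayAdjOp H vpos vneg gen (fibreLift g f) = fibreLift g (adjOpC H f) := by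
  funext p
  rw [cayAdjOp, tsum_eq_sum_of_eq_zero_off_fibre g _ fun q hq => by simp [fibreLift, hq]]
  have hterm : ∀ w : V,
      (if (cayGraph H vpos vneg gen).Adj p (w, g) then fibreLift g f (w, g) else 0)
        = if p.2 = g then (if H.Adj p.1 w then f w else 0) else 0 := fun w => by
    by_cases hw : f w = 0
    · simp [fibreLift, hw]
    · rw [cayGraph_adj_mk_iff H vpos vneg gen (fun k h => hw (by rw [← h, hpos k]))
        (fun k h => hw (by rw [← h, hneg k]))]
      by_cases hg : p.2 = g <;> simp [fibreLift, hg]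
  simp only [hterm]
  by_cases hg : p.2 = g <;> simp [fibreLift, adjOpC, hg]

theorem cayH_fibreLift [Fintype V] {f : V → ℂ} {E : ℝ} (heig : ∀ v, adjOpC H f v = E * f v)
    (hpos : ∀ k, f (vpos k) = 0) (hneg : ∀ k, f (vneg k) = 0) (ω : G → ℝ) (g : G)
    (p : V × G) :
    cayH H vpos vneg gen ω (fibreLift g f) p = ((E + ω g : ℝ) : ℂ) * fibreLift g f p := by
  rw [cayH, cayAdjOp_fibreLift H vpos vneg gen hpos hneg]
  by_cases hg : p.2 = g
  · simp only [fibreLift, hg, if_true, heig]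
    push_cast
    ring
  · simp [fibreLift, hg]

end Fibre

theorem cayley_pp_spectrum_multiplicity_general {V G : Type*} [Group G] [Infinite G] [Fintype V]
    (H : SimpleGraph V) {n : ℕ} (vpos vneg : Fin n → V) (gen : Fin n → G)
    {l m : ℕ} (hl : 2 ≤ l)
    (E₀ : ℝ) (ψ : Fin l → V → ℂ)
    (heig : ∀ i v, adjOpC H (ψ i) v = (E₀ : ℂ) * ψ i v)
    (horth : ∀ i j, ∑ v : V, (starRingEnd ℂ) (ψ i v) * ψ j v = if i = j then 1 else 0)
    (x : Fin m → V)
    (hvan : ∀ i j, ψ i (x j) = 0)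
    (hpos : ∀ i : Fin n, ∃ j : Fin m, vpos i = x j)
    (hneg : ∀ i : Fin n, ∃ j : Fin m, vneg i = x j)
    {Ω : Type*} [MeasurableSpace Ω] (P : Measure Ω) [IsProbabilityMeasure P]
    (μ : Measure ℝ) [IsProbabilityMeasure μ]
    (ω : G → Ω → ℝ)
    (hmeas : ∀ g, Measurable (ω g))
    (hlaw : ∀ g, Measure.map (ω g) P = μ)
    (hindep : iIndepFun (fun g => ω g) P) :
    ∀ᵐ ρ ∂P,
      (∀ t ∈ measSupport μ,
        E₀ + t ∈ closure {s : ℝ | ∃ Ψ : V × G → ℂ, Ψ ≠ 0 ∧ Memℓp Ψ 2 ∧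
          ∀ p, cayH H vpos vneg gen (fun h => ω h ρ) Ψ p = (s : ℂ) * Ψ p}) ∧
      (∀ g : G, ∃ Ψ : Fin l → V × G → ℂ,
        (∀ i, Memℓp (Ψ i) 2) ∧
        (∀ i p, cayH H vpos vneg gen (fun h => ω h ρ) (Ψ i) p
          = ((E₀ + ω g ρ : ℝ) : ℂ) * Ψ i p) ∧
        (∀ i j, ∑' p : V × G, (starRingEnd ℂ) (Ψ i p) * Ψ j p
          = if i = j then 1 else 0)) := by
  have hvanish : ∀ i {w : V}, (∃ j, w = x j) → ψ i w = 0 := by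
    rintro i w ⟨j, rfl⟩
    exact hvan i j
  have hfibre : ∀ ρ g i p, cayH H vpos vneg gen (fun h => ω h ρ) (fibreLift g (ψ i)) p
      = ((E₀ + ω g ρ : ℝ) : ℂ) * fibreLift g (ψ i) p := fun ρ g i =>
    cayH_fibreLift H vpos vneg gen (heig i) (fun k => hvanish i (hpos k))
      (fun k => hvanish i (hneg k)) _ g
  let i₀ : Fin l := ⟨0, by omega⟩
  have hψ₀ : ψ i₀ ≠ 0 := fun h => by simpa [h] using horth i₀ i₀
  filter_upwards [ae_measSupport_subset_closure_range hmeas hlaw hindep] with ρ hρ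
  refine ⟨fun t ht => map_mem_closure (continuous_const_add E₀) (hρ ht) ?_, fun g =>
    ⟨fun i => fibreLift g (ψ i), fun i => memℓp_fibreLift g _ 2, hfibre ρ g,
      fun i j => (tsum_conj_fibreLift_mul g _ _).trans (horth i j)⟩⟩
  rintro _ ⟨g, rfl⟩
  exact ⟨fibreLift g (ψ i₀), fibreLift_ne_zero hψ₀ g, memℓp_fibreLift g _ 2, hfibre ρ g i₀⟩

/-- In the setting of Theorem `cayley_fiber_eigenvectors`, if moreover `G`
is infinite and `(ω_g)_{g∈G}` are i.i.d. with absolutely continuous common law `μ`, then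
almost surely `E₀ + supp(μ)` is contained in the pure point spectrum of `H^ω_G` (the closure
of its set of eigenvalues), and almost surely every eigenvalue `E₀ + ω_g`, `g ∈ G`, has
multiplicity at least `l`. -/
theorem cayley_pp_spectrum_multiplicity {V G : Type*} [Group G] [Infinite G] [Fintype V]
    (H : SimpleGraph V) {n : ℕ} (vpos vneg : Fin n → V) (gen : Fin n → G)
    (hgen : Subgroup.closure (Set.range gen) = ⊤)
    {l m : ℕ} (hl : 2 ≤ l)
    (E₀ : ℝ) (ψ : Fin l → V → ℂ)
    (heig : ∀ i v, adjOpC H (ψ i) v = (E₀ : ℂ) * ψ i v)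
    (horth : ∀ i j, ∑ v : V, (starRingEnd ℂ) (ψ i v) * ψ j v = if i = j then 1 else 0)
    (x : Fin m → V)
    (hvan : ∀ i j, ψ i (x j) = 0)
    (hpos : ∀ i : Fin n, ∃ j : Fin m, vpos i = x j)
    (hneg : ∀ i : Fin n, ∃ j : Fin m, vneg i = x j)
    {Ω : Type*} [MeasurableSpace Ω] (P : Measure Ω) [IsProbabilityMeasure P]
    (μ : Measure ℝ) [IsProbabilityMeasure μ] (hac : μ ≪ volume)
    (ω : G → Ω → ℝ)
    (hmeas : ∀ g, Measurable (ω g))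
    (hlaw : ∀ g, Measure.map (ω g) P = μ)
    (hindep : iIndepFun (fun g => ω g) P) :
    ∀ᵐ ρ ∂P,
      (∀ t ∈ measSupport μ,
        E₀ + t ∈ closure {s : ℝ | ∃ Ψ : V × G → ℂ, Ψ ≠ 0 ∧ Memℓp Ψ 2 ∧
          ∀ p, cayH H vpos vneg gen (fun h => ω h ρ) Ψ p = (s : ℂ) * Ψ p}) ∧
      (∀ g : G, ∃ Ψ : Fin l → V × G → ℂ,
        (∀ i, Memℓp (Ψ i) 2) ∧
        (∀ i p, cayH H vpos vneg gen (fun h => ω h ρ) (Ψ i) p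
          = ((E₀ + ω g ρ : ℝ) : ℂ) * Ψ i p) ∧
        (∀ i j, ∑' p : V × G, (starRingEnd ℂ) (Ψ i p) * Ψ j p
          = if i = j then 1 else 0)) :=
  cayley_pp_spectrum_multiplicity_general H vpos vneg gen hl E₀ ψ heig horth x hvan hpos hneg P μ ω
    hmeas hlaw hindep
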